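/- Time non-resonance for the cubic phase in the case θ₀ = θ₁ ≠ θ₂: for all ξ, η, σ ∈ ℝ², the resonance function φ(ξ,η,σ) = −⟨ξ⟩ + ⟨ξ+η⟩ + ⟨ξ+η+σ⟩ + ⟨ξ+σ⟩ satisfies φ(ξ,η,σ) ≥ 3/(⟨ξ⟩ + ⟨η⟩ + ⟨ξ+η⟩) > 0. -/

import Mathlib

/-! Writing `a = ⟨A⟩`, `b = ⟨B⟩`, `c = ⟨C⟩` with `|C| ≤ |A + B|`, Cauchy–Schwarz for `(1, A)` and
`(1, B)` gives `ab ≥ 1 + AB`, hence `(a + b - c)(a + b + c) = 1 + A² + B² - C² + 2ab ≥ 3`.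
The phase splits as `(⟨ξ+η⟩ + ⟨η⟩ - ⟨ξ⟩) + (⟨ξ+η+σ⟩ + ⟨ξ+σ⟩ - ⟨η⟩)`; the triangle inequality
puts both brackets in this situation, and the second one is merely dropped as nonnegative. -/

noncomputable section

/-- Japanese bracket `⟨ξ⟩ = (1+|ξ|²)^{1/2}` on `ℝ²`. -/
def jb (ξ : EuclideanSpace ℝ (Fin 2)) : ℝ := Real.sqrt (1 + ‖ξ‖ ^ 2)

theorem one_add_mul_le_sqrt_mul_sqrt (A B : ℝ) : 1 + A * B ≤ √(1 + A ^ 2) * √(1 + B ^ 2) := by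
  rw [← Real.sqrt_mul (by positivity)]
  refine Real.le_sqrt_of_sq_le ?_
  nlinarith [sq_nonneg (A - B)]

theorem three_div_le_sqrt_add_sqrt_sub_sqrt {A B C : ℝ} (h : C ^ 2 ≤ (A + B) ^ 2) :
    3 / (√(1 + A ^ 2) + √(1 + B ^ 2) + √(1 + C ^ 2)) ≤
      √(1 + A ^ 2) + √(1 + B ^ 2) - √(1 + C ^ 2) := by
  have ha := Real.sq_sqrt (by positivity : (0 : ℝ) ≤ 1 + A ^ 2)
  have hb := Real.sq_sqrt (by positivity : (0 : ℝ) ≤ 1 + B ^ 2)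
  have hc := Real.sq_sqrt (by positivity : (0 : ℝ) ≤ 1 + C ^ 2)
  have hab := one_add_mul_le_sqrt_mul_sqrt A B
  rw [div_le_iff₀ (by positivity)]
  nlinarith

theorem jb_pos (x : EuclideanSpace ℝ (Fin 2)) : 0 < jb x :=
  Real.sqrt_pos.mpr (by positivity)

theorem three_div_le_jb_add_jb_sub_jb_sub (x y : EuclideanSpace ℝ (Fin 2)) :
    3 / (jb (x - y) + jb y + jb x) ≤ jb x + jb y - jb (x - y) := by
  rw [show jb (x - y) + jb y + jb x = jb x + jb y + jb (x - y) by ring]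
  exact three_div_le_sqrt_add_sqrt_sub_sqrt
    (pow_le_pow_left₀ (norm_nonneg _) (norm_sub_le x y) 2)

/-- Time non-resonance for the cubic phase in the case `θ₀ = θ₁ ≠ θ₂`. -/
theorem cubic_time_nonresonance (ξ η σ : EuclideanSpace ℝ (Fin 2)) :
    -jb ξ + jb (ξ + η) + jb (ξ + η + σ) + jb (ξ + σ) ≥
      3 / (jb ξ + jb η + jb (ξ + η)) ∧
    0 < -jb ξ + jb (ξ + η) + jb (ξ + η + σ) + jb (ξ + σ) := by
  have h₁ := three_div_le_jb_add_jb_sub_jb_sub (ξ + η) η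
  rw [add_sub_cancel_right] at h₁
  have h₂ := three_div_le_jb_add_jb_sub_jb_sub (ξ + η + σ) (ξ + σ)
  rw [show ξ + η + σ - (ξ + σ) = η by abel] at h₂
  have hpos₁ : 0 < 3 / (jb ξ + jb η + jb (ξ + η)) := by
    have := jb_pos ξ; have := jb_pos η; have := jb_pos (ξ + η); positivity
  have hpos₂ : 0 < 3 / (jb η + jb (ξ + σ) + jb (ξ + η + σ)) := by
    have := jb_pos η; have := jb_pos (ξ + σ); have := jb_pos (ξ + η + σ); positivity
  constructor <;> linarith
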